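/- Gossip-step coupling inequality (appendix lemma, eq. (C4)). Under the stated hypotheses, −2⟨y⁺ − y, y_g + z_g − (y* + z*)⟩ ≤ (1/ϑ₂)‖y_g + z_g − (y* + z*)‖² − (1/ϑ₂)‖y_f⁺ + z_f⁺ − (y* + z*)‖² + 2ϑ₂‖y⁺ − y‖² − (1/(2ϑ₂χ))‖y_g + z_g‖_P². -/

import Mathlib

open MeasureTheory RealInnerProductSpace
open scoped ENNReal

noncomputable section

/-- The space `E = (ℝ^d)^n` with the standard Euclidean inner product. -/
abbrev Vs (d n : ℕ) : Type := EuclideanSpace ℝ (Fin n × Fin d)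

/-- The consensus subspace `L = {(x₁,…,xₙ) : x₁ = ⋯ = xₙ}` of `(ℝ^d)^n`. -/
def consensus (d n : ℕ) : Submodule ℝ (Vs d n) where
  carrier := {x | ∀ i j : Fin n, ∀ k : Fin d, x (i, k) = x (j, k)}
  add_mem' := by
    intro a b ha hb i j k
    simp only [Set.mem_setOf_eq] at ha hb
    simp [PiLp.add_apply, ha i j k, hb i j k]
  zero_mem' := by intro i j k; rfl
  smul_mem' := by
    intro c a ha i j k
    simp only [Set.mem_setOf_eq] at ha
    simp [PiLp.smul_apply, ha i j k]

/-- Orthogonal projection of `E` onto `L⊥`. -/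
def projP (d n : ℕ) (x : Vs d n) : Vs d n :=
  ((consensus d n)ᗮ.orthogonalProjectionOnto x : Vs d n)

/-- The Kronecker product `W ⊗ I_d` acting on `E = (ℝ^d)^n`. -/
def kron {d n : ℕ} (W : Matrix (Fin n) (Fin n) ℝ) (x : Vs d n) : Vs d n :=
  WithLp.toLp 2 (fun p : Fin n × Fin d => ∑ j, W p.1 j * x (j, p.2))

/-! Write `u = y_g + z_g`, `s = y* + z*` and `K = (W ⊗ I_d) u`. Since `y_f⁺ + z_f⁺ - s =
(u - s) + ϑ₂(y⁺ - y) - K/2`, expanding the square and completing it in `ϑ₂(y⁺ - y) + K/2`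
reduces the claim to `χ⁻¹‖P u‖² ≤ 2⟪u - s, K⟫ - ‖K‖²`. The operator `W ⊗ I_d` is self-adjoint
and vanishes on the consensus subspace, which contains `s` and `u - P u`; so the right-hand side
equals `2⟪P u, K'⟫ - ‖K'‖²` with `K' = (W ⊗ I_d)(P u)`, and the contraction hypothesis applied to
`P u ∈ L⊥` bounds it below by `χ⁻¹‖P u‖²`. -/

lemma inv_mul_norm_sq_le_of_norm_sub_sq_le {E : Type*} [NormedAddCommGroup E]
    [InnerProductSpace ℝ E] {v w : E} {χ : ℝ} (h : ‖w - v‖ ^ 2 ≤ (1 - χ⁻¹) * ‖v‖ ^ 2) :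
    χ⁻¹ * ‖v‖ ^ 2 ≤ 2 * ⟪v, w⟫ - ‖w‖ ^ 2 := by
  rw [norm_sub_sq_real, real_inner_comm] at h
  linarith

lemma neg_two_inner_le_of_le {E : Type*} [NormedAddCommGroup E] [InnerProductSpace ℝ E]
    (a δ K : E) {ϑ χ q : ℝ} (hϑ : 0 < ϑ) (hK : χ⁻¹ * q ≤ 2 * ⟪a, K⟫ - ‖K‖ ^ 2) :
    -2 * ⟪δ, a⟫ ≤ (1 / ϑ) * ‖a‖ ^ 2 - (1 / ϑ) * ‖a + ϑ • δ - (1 / 2 : ℝ) • K‖ ^ 2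
      + 2 * ϑ * ‖δ‖ ^ 2 - (1 / (2 * ϑ * χ)) * q := by
  have key : (1 / ϑ) * ‖a‖ ^ 2 - (1 / ϑ) * ‖a + ϑ • δ - (1 / 2 : ℝ) • K‖ ^ 2
      + 2 * ϑ * ‖δ‖ ^ 2 - (1 / (2 * ϑ * χ)) * q - -2 * ⟪δ, a⟫
      = (1 / ϑ) * ‖ϑ • δ + (1 / 2 : ℝ) • K‖ ^ 2
        + (1 / (2 * ϑ)) * (2 * ⟪a, K⟫ - ‖K‖ ^ 2 - χ⁻¹ * q) := by
    simp only [← real_inner_self_eq_norm_sq, inner_sub_left, inner_sub_right, inner_add_left,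
      inner_add_right, real_inner_smul_left, real_inner_smul_right, real_inner_comm a,
      real_inner_comm δ K]
    field_simp
    ring
  rw [← sub_nonneg, key]
  have := sub_nonneg.mpr hK
  positivity

section Consensus

variable {d n : ℕ} {W : Matrix (Fin n) (Fin n) ℝ}

lemma projP_mem_orthogonal (x : Vs d n) : projP d n x ∈ (consensus d n)ᗮ :=
  ((consensus d n)ᗮ.orthogonalProjectionOnto x).2

lemma sub_projP_mem_consensus (x : Vs d n) : x - projP d n x ∈ consensus d n := by
  have h := (consensus d n)ᗮ.sub_starProjection_mem_orthogonal x
  rwa [Submodule.orthogonal_orthogonal] at h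

lemma kron_sub (x y : Vs d n) : kron W (x - y) = kron W x - kron W y := by
  ext p
  simp [kron, mul_sub, Finset.sum_sub_distrib]

lemma inner_kron_left (hWs : W.IsSymm) (x y : Vs d n) :
    ⟪kron W x, y⟫ = ⟪x, kron W y⟫ := by
  simp only [PiLp.inner_apply, RCLike.inner_apply, conj_trivial, kron,
    Fintype.sum_prod_type, Finset.sum_mul, Finset.mul_sum]
  rw [Finset.sum_comm]
  conv_rhs => rw [Finset.sum_comm]
  refine Finset.sum_congr rfl fun k _ => ?_
  rw [Finset.sum_comm]
  refine Finset.sum_congr rfl fun j _ => Finset.sum_congr rfl fun i _ => ?_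
  rw [hWs.apply i j]
  ring

lemma kron_eq_zero_of_mem_consensus (hW1 : W.mulVec 1 = 0) {s : Vs d n}
    (hs : s ∈ consensus d n) : kron W s = 0 := by
  ext ⟨i, k⟩
  have hrow : ∑ j, W i j = 0 := by
    simpa [Matrix.mulVec, dotProduct] using congrFun hW1 i
  calc ∑ j, W i j * s (j, k) = (∑ j, W i j) * s (i, k) := by
        rw [Finset.sum_mul]
        exact Finset.sum_congr rfl fun j _ => by rw [hs j i k]
    _ = 0 := by rw [hrow, zero_mul]

lemma inner_kron_eq_zero_of_mem_consensus (hWs : W.IsSymm) (hW1 : W.mulVec 1 = 0)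
    {s : Vs d n} (hs : s ∈ consensus d n) (x : Vs d n) : ⟪s, kron W x⟫ = 0 := by
  rw [← inner_kron_left hWs, kron_eq_zero_of_mem_consensus hW1 hs, inner_zero_left]

lemma kron_projP (hW1 : W.mulVec 1 = 0) (x : Vs d n) : kron W (projP d n x) = kron W x := by
  rw [eq_comm, ← sub_eq_zero, ← kron_sub]
  exact kron_eq_zero_of_mem_consensus hW1 (sub_projP_mem_consensus x)

lemma inv_mul_norm_projP_sq_le (hWs : W.IsSymm) (hW1 : W.mulVec 1 = 0) {χ : ℝ}
    (hcontr : ∀ u ∈ (consensus d n)ᗮ, ‖kron W u - u‖ ^ 2 ≤ (1 - χ⁻¹) * ‖u‖ ^ 2)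
    {s : Vs d n} (hs : s ∈ consensus d n) (u : Vs d n) :
    χ⁻¹ * ‖projP d n u‖ ^ 2 ≤ 2 * ⟪u - s, kron W u⟫ - ‖kron W u‖ ^ 2 := by
  have hL : u - s - projP d n u ∈ consensus d n := by
    rw [sub_right_comm]
    exact sub_mem (sub_projP_mem_consensus u) hs
  have hinner : ⟪u - s, kron W u⟫ = ⟪projP d n u, kron W (projP d n u)⟫ := by
    rw [← kron_projP hW1 u, ← sub_eq_zero, ← inner_sub_left]
    exact inner_kron_eq_zero_of_mem_consensus hWs hW1 hL _
  rw [hinner, ← kron_projP hW1 u]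
  exact inv_mul_norm_sq_le_of_norm_sub_sq_le (hcontr _ (projP_mem_orthogonal u))

end Consensus

theorem gossip_step_coupling_inequality_general
    {d n : ℕ}
    (W : Matrix (Fin n) (Fin n) ℝ) (hWsymm : W.IsSymm)
    (hWker : ∀ v : Fin n → ℝ, W.mulVec v = 0 ↔ ∃ c, ∀ i, v i = c)
    (χ : ℝ)
    (hcontr : ∀ u ∈ (consensus d n)ᗮ, ‖kron W u - u‖ ^ 2 ≤ (1 - χ⁻¹) * ‖u‖ ^ 2)
    (ϑ₂ ζ : ℝ) (hϑ₂ : 0 < ϑ₂) (hζ : ζ = 1 / 2)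
    (y yg yp zg : Vs d n)
    (ystar zstar : Vs d n) (hyz : ystar + zstar ∈ consensus d n)
    (yfp : Vs d n) (hyfp : yfp = yg + ϑ₂ • (yp - y))
    (zfp : Vs d n) (hzfp : zfp = zg - ζ • kron W (yg + zg)) :
    -2 * ⟪yp - y, yg + zg - (ystar + zstar)⟫ ≤
      (1 / ϑ₂) * ‖yg + zg - (ystar + zstar)‖ ^ 2
        - (1 / ϑ₂) * ‖yfp + zfp - (ystar + zstar)‖ ^ 2
        + 2 * ϑ₂ * ‖yp - y‖ ^ 2
        - (1 / (2 * ϑ₂ * χ)) * ‖projP d n (yg + zg)‖ ^ 2 := by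
  have hW1 : W.mulVec 1 = 0 := (hWker 1).mpr ⟨1, fun _ => rfl⟩
  have hstep : yfp + zfp - (ystar + zstar) = yg + zg - (ystar + zstar) + ϑ₂ • (yp - y)
      - (1 / 2 : ℝ) • kron W (yg + zg) := by
    rw [hyfp, hzfp, hζ]
    abel
  rw [hstep]
  exact neg_two_inner_le_of_le _ _ _ hϑ₂ (inv_mul_norm_projP_sq_le hWsymm hW1 hcontr hyz _)

/-- Gossip-step coupling inequality (appendix lemma, eq. (C4)):
with `ζ = 1/2`, `y_f⁺ := y_g + ϑ₂(y⁺ − y)` and `z_f⁺ := z_g − ζ(W ⊗ I_d)(y_g + z_g)`,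
`−2⟪y⁺ − y, y_g + z_g − (y* + z*)⟫ ≤ (1/ϑ₂)‖y_g + z_g − (y* + z*)‖²
  − (1/ϑ₂)‖y_f⁺ + z_f⁺ − (y* + z*)‖² + 2ϑ₂‖y⁺ − y‖² − (1/(2ϑ₂χ))‖y_g + z_g‖_P²`. -/
theorem gossip_step_coupling_inequality
    {d n : ℕ} (hd : 0 < d) (hn : 0 < n)
    (W : Matrix (Fin n) (Fin n) ℝ) (hWsymm : W.IsSymm) (hWpsd : W.PosSemidef)
    (hWker : ∀ v : Fin n → ℝ, W.mulVec v = 0 ↔ ∃ c, ∀ i, v i = c)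
    (χ : ℝ) (hχ : 1 ≤ χ)
    (hcontr : ∀ u ∈ (consensus d n)ᗮ, ‖kron W u - u‖ ^ 2 ≤ (1 - χ⁻¹) * ‖u‖ ^ 2)
    (ϑ₂ ζ : ℝ) (hϑ₂ : 0 < ϑ₂) (hζ : ζ = 1 / 2)
    (y yg yp zg : Vs d n)
    (ystar zstar : Vs d n) (hyz : ystar + zstar ∈ consensus d n)
    (yfp : Vs d n) (hyfp : yfp = yg + ϑ₂ • (yp - y))
    (zfp : Vs d n) (hzfp : zfp = zg - ζ • kron W (yg + zg)) :
    -2 * ⟪yp - y, yg + zg - (ystar + zstar)⟫ ≤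
      (1 / ϑ₂) * ‖yg + zg - (ystar + zstar)‖ ^ 2
        - (1 / ϑ₂) * ‖yfp + zfp - (ystar + zstar)‖ ^ 2
        + 2 * ϑ₂ * ‖yp - y‖ ^ 2
        - (1 / (2 * ϑ₂ * χ)) * ‖projP d n (yg + zg)‖ ^ 2 :=
  gossip_step_coupling_inequality_general W hWsymm hWker χ hcontr ϑ₂ ζ hϑ₂ hζ y yg yp zg ystar zstar
    hyz yfp hyfp zfp hzfp
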